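/- Let p_z be any real number with 0 < p_z < 1/2. Then there exist an integer n ≥ 2 and substitution probabilities q ∈ (0,1/2) and p_y ∈ (0,1/2) such that for the rooted binary tree T whose root ρ has a single leaf z attached by an edge of substitution probability p_z and a balanced binary subtree T_Y of depth n (substitution probability q on every edge) attached by an edge of substitution probability p_y, the following hold: (1) the substitution probability from ρ to z is p_z; (2) RA(X \ {ز}) = RA(Y) > RA(X), where X = Y ∪ {z} and Y is the leaf set of T_Y; and (3) for every leaf v ≠ z, the net substitution probability from ρ to v, namely (1 − (1−2p_y)(1−2q)^n)/2, is strictly greater than p_z. -/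

import Mathlib

/-!
Model: rooted binary phylogenetic trees whose edges carry substitution
probabilities, evolving binary characters (states `true` = α, `false` = β)
under the two-state symmetric (Neyman) model, and Fitch's maximum parsimony
algorithm.
-/

/-- A rooted binary tree; an internal node records the substitution
probabilities on the edges to its two children. -/
inductive PTree where
  | leaf : PTree
  | node (p₁ p₂ : ℝ) (t₁ t₂ : PTree) : PTree

/-- The type of binary characters on a tree: an assignment of a state
(`true` = α, `false` = β) to each leaf. -/
def PTree.Char : PTree → Type
  | .leaf => Bool
  | .node _ _ t₁ t₂ => t₁.Char × t₂.Char

instance PTree.Char.instFintype : (t : PTree) → Fintype t.Char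
  | .leaf => inferInstanceAs (Fintype Bool)
  | .node _ _ t₁ t₂ =>
      letI := PTree.Char.instFintype t₁
      letI := PTree.Char.instFintype t₂
      inferInstanceAs (Fintype (_ × _))

instance PTree.Char.instDecidableEq : (t : PTree) → DecidableEq t.Char
  | .leaf => inferInstanceAs (DecidableEq Bool)
  | .node _ _ t₁ t₂ =>
      letI := PTree.Char.instDecidableEq t₁
      letI := PTree.Char.instDecidableEq t₂
      inferInstanceAs (DecidableEq (_ × _))

/-- Single-edge transition probability of the two-state symmetric model:
conditional on the parent being in state `s`, the child is in state `s'`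
with probability `1 - p` if `s' = s` and `p` otherwise. -/
def transProb (p : ℝ) (s s' : Bool) : ℝ := if s' = s then 1 - p else p

/-- `t.charProb s c` is the probability that the character `c` is generated
at the leaves of `t` conditional on the root of `t` being in state `s`
(substitutions happen independently across edges). -/
def PTree.charProb : (t : PTree) → Bool → t.Char → ℝ
  | .leaf, s, c => @ite _ (c = s) (instDecidableEqBool c s) 1 0
  | .node p₁ p₂ t₁ t₂, s, c =>
      (∑ s₁ : Bool, transProb p₁ s s₁ * t₁.charProb s₁ c.1) *
      (∑ s₂ : Bool, transProb p₂ s s₂ * t₂.charProb s₂ c.2)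

/-- The state set assigned to the root by Fitch's maximum parsimony
algorithm: a leaf in state `s` gets `{s}`; an internal node gets the
intersection of the children's state sets if nonempty, else their union. -/
def PTree.fitch : (t : PTree) → t.Char → Finset Bool
  | .leaf, c => {c}
  | .node _ _ t₁ t₂, c =>
      if (t₁.fitch c.1 ∩ t₂.fitch c.2).Nonempty then t₁.fitch c.1 ∩ t₂.fitch c.2
      else t₁.fitch c.1 ∪ t₂.fitch c.2

/-- `P_α`: probability, conditional on the root being in state α, that MP
returns the state set `{α}`. -/
noncomputable def PTree.probAlpha (t : PTree) : ℝ :=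
  ∑ c : t.Char, if t.fitch c = {true} then t.charProb true c else 0

/-- `P_β`: probability, conditional on the root being in state α, that MP
returns the state set `{β}`. -/
noncomputable def PTree.probBeta (t : PTree) : ℝ :=
  ∑ c : t.Char, if t.fitch c = {false} then t.charProb true c else 0

/-- `P_{αβ}`: probability, conditional on the root being in state α, that MP
returns the state set `{α, β}`. -/
noncomputable def PTree.probBoth (t : PTree) : ℝ :=
  ∑ c : t.Char, if t.fitch c = ({true, false} : Finset Bool) then t.charProb true c else 0

/-- The reconstruction accuracy `RA = UA + AA/2` of maximum parsimony on all
leaves of `t`, the conditioning root state being the root of `t` itself. -/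
noncomputable def PTree.RA (t : PTree) : ℝ := t.probAlpha + t.probBoth / 2

/-- Probability of the character `c` on `t` conditional on the state `s` of an
ancestor vertex joined to the root of `t` by an edge of substitution
probability `p`. -/
noncomputable def PTree.charProbVia (t : PTree) (p : ℝ) (s : Bool) (c : t.Char) : ℝ :=
  ∑ s' : Bool, transProb p s s' * t.charProb s' c

/-- Reconstruction accuracy of MP applied to the subtree `t` (rooted at `y`),
where the ancestral state being estimated is that of a vertex `ρ` joined to
`y` by an edge of substitution probability `p`:
`RA = P(MP = {α} | ρ = α) + (1/2)·P(MP = {α,β} | ρ = α)`. -/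
noncomputable def PTree.RAVia (t : PTree) (p : ℝ) : ℝ :=
  (∑ c : t.Char, if t.fitch c = {true} then t.charProbVia p true c else 0) +
  (∑ c : t.Char, if t.fitch c = ({true, false} : Finset Bool) then t.charProbVia p true c else 0) / 2

/-- All edge substitution probabilities lie in `[0, 1/2]`. -/
def PTree.valid : PTree → Prop
  | .leaf => True
  | .node p₁ p₂ t₁ t₂ => 0 ≤ p₁ ∧ p₁ ≤ 1/2 ∧ 0 ≤ p₂ ∧ p₂ ≤ 1/2 ∧ t₁.valid ∧ t₂.valid

/-- The list of net substitution probabilities from the root to each leaf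
(obtained by chaining the single-edge substitution probabilities). -/
def PTree.leafFlipProbs : PTree → List ℝ
  | .leaf => [0]
  | .node p₁ p₂ t₁ t₂ =>
      (t₁.leafFlipProbs.map fun r => (1 - p₁) * r + p₁ * (1 - r)) ++
      (t₂.leafFlipProbs.map fun r => (1 - p₂) * r + p₂ * (1 - r))

/-- The balanced binary tree of depth `n` with substitution probability `q`
on every edge. -/
def balanced (q : ℝ) : ℕ → PTree
  | 0 => .leaf
  | n + 1 => .node q q (balanced q n) (balanced q n)

/-- `P_α(n,q)` for the balanced tree of depth `n`. -/
noncomputable def Palpha (n : ℕ) (q : ℝ) : ℝ := (balanced q n).probAlpha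

/-- `P_β(n,q)` for the balanced tree of depth `n`. -/
noncomputable def Pbeta (n : ℕ) (q : ℝ) : ℝ := (balanced q n).probBeta

/-- `P_{αβ}(n,q)` for the balanced tree of depth `n`. -/
noncomputable def Palphabeta (n : ℕ) (q : ℝ) : ℝ := (balanced q n).probBoth

/-!
Everything is governed by two numbers attached to a tree, conditional on its root being in
state α: the bias `D = P(MP = {α}) - P(MP = {β})` and the ambiguity `c = P(MP = {α, β})`.
Both `RA` and `RAVia` are affine in `D`, and Fitch's rule expresses `D` and `c` of a node
through those of its children. Hence adding the leaf `z` lowers the accuracy exactly when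
`(1 - 2 p_z)(1 + c_Y) < (1 - 2 p_y) D_Y`. For the balanced tree of depth 2 one finds
`D = (1 - 2q)² (1 + c₁)`, where the ambiguity `c₁ = 2q(1-q)` of the depth-1 tree strictly
exceeds the ambiguity `c` of the depth-2 tree, so `D > (1 - 2q)² (1 + c)`. With `q = p_z / 2`
also `1 - 2 p_z < (1 - 2q)²`, and `p_y` can then be chosen so that `(1 - 2 p_y)(1 - 2q)²` lies
just below `1 - 2 p_z` while the criterion still holds.
-/

theorem sum_transProb (p : ℝ) (s : Bool) : ∑ s', transProb p s s' = 1 := by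
  cases s <;> simp [transProb]

theorem sum_finset_bool (f : Finset Bool → ℝ) :
    ∑ A, f A = f ∅ + f {true} + f {false} + f {true, false} := by
  rw [show (Finset.univ : Finset (Finset Bool)) = {∅, {true}, {false}, {true, false}} by decide]
  rw [Finset.sum_insert (by decide), Finset.sum_insert (by decide), Finset.sum_insert (by decide),
    Finset.sum_singleton]
  ring

namespace PTree

def fitchMerge (A B : Finset Bool) : Finset Bool :=
  if (A ∩ B).Nonempty then A ∩ B else A ∪ B

theorem fitch_node (p₁ p₂ : ℝ) (t₁ t₂ : PTree) (c : (node p₁ p₂ t₁ t₂).Char) :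
    (node p₁ p₂ t₁ t₂).fitch c = fitchMerge (t₁.fitch c.1) (t₂.fitch c.2) := rfl

theorem charProb_node (p₁ p₂ : ℝ) (t₁ t₂ : PTree) (s : Bool) (c : (node p₁ p₂ t₁ t₂).Char) :
    (node p₁ p₂ t₁ t₂).charProb s c = t₁.charProbVia p₁ s c.1 * t₂.charProbVia p₂ s c.2 := rfl

theorem sum_leaf (f : leaf.Char → ℝ) : ∑ c, f c = f true + f false := Fintype.sum_bool f

theorem sum_node {p₁ p₂ : ℝ} {t₁ t₂ : PTree} (f : (node p₁ p₂ t₁ t₂).Char → ℝ) :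
    ∑ c, f c = ∑ c₁ : t₁.Char, ∑ c₂ : t₂.Char, f (c₁, c₂) := Fintype.sum_prod_type f

theorem fitch_nonempty : (t : PTree) → ∀ c, (t.fitch c).Nonempty
  | .leaf, c => Finset.singleton_nonempty c
  | .node _ _ t₁ t₂, c => by
      rw [fitch_node, fitchMerge]
      split_ifs with h
      · exact h
      · exact (t₁.fitch_nonempty c.1).mono Finset.subset_union_left

theorem sum_charProbVia (t : PTree) (p : ℝ) (s : Bool) :
    ∑ c, t.charProbVia p s c = ∑ s', transProb p s s' * ∑ c, t.charProb s' c := by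
  simp only [charProbVia, Finset.mul_sum]
  exact Finset.sum_comm

theorem sum_charProb : (t : PTree) → ∀ s, ∑ c, t.charProb s c = 1
  | .leaf, s => by cases s <;> simp [sum_leaf, charProb] <;> rfl
  | .node p₁ p₂ t₁ t₂, s => by
      simp only [sum_node, charProb_node, ← Finset.mul_sum, sum_charProbVia,
        sum_charProb, mul_one, sum_transProb]

noncomputable def fitchProb (t : PTree) (s : Bool) (S : Finset Bool) : ℝ :=
  ∑ c, if t.fitch c = S then t.charProb s c else 0

noncomputable def fitchProbVia (t : PTree) (p : ℝ) (s : Bool) (S : Finset Bool) : ℝ :=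
  ∑ s', transProb p s s' * t.fitchProb s' S

theorem fitchProbVia_eq_sum (t : PTree) (p : ℝ) (s : Bool) (S : Finset Bool) :
    t.fitchProbVia p s S = ∑ c, if t.fitch c = S then t.charProbVia p s c else 0 := by
  simp only [fitchProbVia, fitchProb, charProbVia, Finset.mul_sum, mul_ite, mul_zero]
  rw [Finset.sum_comm]
  refine Finset.sum_congr rfl fun c _ => ?_
  split_ifs <;> simp

theorem fitchProb_node (p₁ p₂ : ℝ) (t₁ t₂ : PTree) (s : Bool) (S : Finset Bool) :
    (node p₁ p₂ t₁ t₂).fitchProb s S = ∑ A, ∑ B,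
      if fitchMerge A B = S then t₁.fitchProbVia p₁ s A * t₂.fitchProbVia p₂ s B else 0 := by
  simp only [fitchProbVia_eq_sum, Finset.sum_mul_sum, fitchProb, sum_node]
  calc _ = ∑ c₁ : t₁.Char, ∑ c₂ : t₂.Char, ∑ A : Finset Bool, ∑ B : Finset Bool,
          if fitchMerge A B = S then (if t₁.fitch c₁ = A then t₁.charProbVia p₁ s c₁ else 0) *
            (if t₂.fitch c₂ = B then t₂.charProbVia p₂ s c₂ else 0) else 0 := by
        refine Finset.sum_congr rfl fun c₁ _ => Finset.sum_congr rfl fun c₂ _ => ?_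
        rw [Fintype.sum_eq_single (t₁.fitch c₁) (fun A hA => by simp [Ne.symm hA]),
          Fintype.sum_eq_single (t₂.fitch c₂) (fun B hB => by simp [Ne.symm hB])]
        simp only [if_true]
        rfl
    _ = _ := by
        simp only [Finset.ite_sum_zero]
        refine (Finset.sum_congr rfl fun c₁ _ => Finset.sum_comm).trans
          (Finset.sum_comm.trans (Finset.sum_congr rfl fun A _ =>
            (Finset.sum_congr rfl fun c₁ _ => Finset.sum_comm).trans Finset.sum_comm))

def flip : (t : PTree) → t.Char → t.Char
  | .leaf, c => !c
  | .node _ _ t₁ t₂, c => (t₁.flip c.1, t₂.flip c.2)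

theorem flip_involutive : (t : PTree) → Function.Involutive t.flip
  | .leaf, c => Bool.not_not c
  | .node _ _ t₁ t₂, c => Prod.ext (t₁.flip_involutive c.1) (t₂.flip_involutive c.2)

theorem charProb_flip : (t : PTree) → ∀ s c, t.charProb s (t.flip c) = t.charProb (!s) c
  | .leaf, s, c => by cases s <;> cases c <;> rfl
  | .node p₁ p₂ t₁ t₂, s, c => by
      rw [charProb_node, charProb_node]
      simp only [flip, charProbVia, Fintype.sum_bool, charProb_flip]
      cases s <;> simp only [transProb] <;> norm_num <;> ring

theorem fitch_flip : (t : PTree) → ∀ c, t.fitch (t.flip c) = (t.fitch c).image Bool.not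
  | .leaf, c => by cases c <;> decide
  | .node _ _ t₁ t₂, c => by
      rw [fitch_node, fitch_node]
      simp only [flip, fitch_flip, fitchMerge,
        ← Finset.image_inter _ _ Bool.not_injective, Finset.image_nonempty]
      split_ifs <;> simp [Finset.image_union]

theorem fitchProb_not (t : PTree) (s : Bool) (S : Finset Bool) :
    t.fitchProb (!s) S = t.fitchProb s (S.image Bool.not) := by
  rw [fitchProb, ← (t.flip_involutive.bijective).sum_comp]
  refine Finset.sum_congr rfl fun c _ => ?_
  have image_not_eq_iff : ∀ A B : Finset Bool, A.image Bool.not = B ↔ A = B.image Bool.not := by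
    decide
  simp only [charProb_flip, Bool.not_not, fitch_flip, image_not_eq_iff]

theorem fitchProb_empty (t : PTree) (s : Bool) : t.fitchProb s ∅ = 0 :=
  Finset.sum_eq_zero fun c _ => if_neg (t.fitch_nonempty c).ne_empty

theorem fitchProb_add_fitchProb_add_fitchProb (t : PTree) (s : Bool) :
    t.fitchProb s {true} + t.fitchProb s {false} + t.fitchProb s {true, false} = 1 := by
  have total : ∑ S, t.fitchProb s S = 1 := by
    simp only [fitchProb]
    rw [Finset.sum_comm]
    simp only [Fintype.sum_ite_eq, sum_charProb]
  rwa [sum_finset_bool, fitchProb_empty, zero_add] at total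

noncomputable def bias (t : PTree) : ℝ := t.fitchProb true {true} - t.fitchProb true {false}

noncomputable def ambiguity (t : PTree) : ℝ := t.fitchProb true {true, false}

theorem fitchProbVia_true (t : PTree) (p : ℝ) (S : Finset Bool) :
    t.fitchProbVia p true S =
      (1 - p) * t.fitchProb true S + p * t.fitchProb true (S.image Bool.not) := by
  rw [fitchProbVia, Fintype.sum_bool, ← Bool.not_true, fitchProb_not]
  simp [transProb]

theorem fitchProbVia_singleton_true (t : PTree) (p : ℝ) :
    t.fitchProbVia p true {true} = (1 - t.ambiguity + (1 - 2 * p) * t.bias) / 2 := by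
  rw [fitchProbVia_true, show ({true} : Finset Bool).image Bool.not = {false} by decide, ambiguity,
    bias]
  linear_combination (1 / 2 : ℝ) * t.fitchProb_add_fitchProb_add_fitchProb true

theorem fitchProbVia_singleton_false (t : PTree) (p : ℝ) :
    t.fitchProbVia p true {false} = (1 - t.ambiguity - (1 - 2 * p) * t.bias) / 2 := by
  rw [fitchProbVia_true, show ({false} : Finset Bool).image Bool.not = {true} by decide, ambiguity,
    bias]
  linear_combination (1 / 2 : ℝ) * t.fitchProb_add_fitchProb_add_fitchProb true

theorem fitchProbVia_pair (t : PTree) (p : ℝ) :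
    t.fitchProbVia p true {true, false} = t.ambiguity := by
  rw [fitchProbVia_true, ambiguity,
    show ({true, false} : Finset Bool).image Bool.not = {true, false} by decide]
  ring

theorem fitchProbVia_empty (t : PTree) (p : ℝ) (s : Bool) : t.fitchProbVia p s ∅ = 0 := by
  simp [fitchProbVia, fitchProb_empty]

theorem RA_eq (t : PTree) : t.RA = (1 + t.bias) / 2 := by
  show t.fitchProb true {true} + t.fitchProb true {true, false} / 2 = _
  rw [bias]
  linear_combination (1 / 2 : ℝ) * t.fitchProb_add_fitchProb_add_fitchProb true

theorem RAVia_eq (t : PTree) (p : ℝ) : t.RAVia p = (1 + (1 - 2 * p) * t.bias) / 2 := by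
  rw [RAVia, ← fitchProbVia_eq_sum, ← fitchProbVia_eq_sum, fitchProbVia_singleton_true,
    fitchProbVia_pair]
  ring

theorem bias_node (p₁ p₂ : ℝ) (t₁ t₂ : PTree) :
    (node p₁ p₂ t₁ t₂).bias =
      ((1 - 2 * p₁) * t₁.bias * (1 + t₂.ambiguity) +
        (1 - 2 * p₂) * t₂.bias * (1 + t₁.ambiguity)) / 2 := by
  rw [bias, fitchProb_node, fitchProb_node]
  simp +decide only [sum_finset_bool, fitchMerge, if_true, if_false, fitchProbVia_empty,
    fitchProbVia_singleton_true, fitchProbVia_singleton_false, fitchProbVia_pair]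
  ring

theorem ambiguity_node (p₁ p₂ : ℝ) (t₁ t₂ : PTree) :
    (node p₁ p₂ t₁ t₂).ambiguity = t₁.ambiguity * t₂.ambiguity +
      ((1 - t₁.ambiguity) * (1 - t₂.ambiguity) -
        (1 - 2 * p₁) * (1 - 2 * p₂) * t₁.bias * t₂.bias) / 2 := by
  rw [ambiguity, fitchProb_node]
  simp +decide only [sum_finset_bool, fitchMerge, if_true, if_false, fitchProbVia_empty,
    fitchProbVia_singleton_true, fitchProbVia_singleton_false, fitchProbVia_pair]
  ring

theorem fitchProb_leaf (s : Bool) (S : Finset Bool) :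
    leaf.fitchProb s S = if ({s} : Finset Bool) = S then 1 else 0 := by
  have charProb_leaf (c : Bool) : leaf.charProb s c = if c = s then 1 else 0 := rfl
  have fitch_leaf (c : Bool) : leaf.fitch c = {c} := rfl
  rw [fitchProb, sum_leaf]
  simp only [charProb_leaf, fitch_leaf]
  cases s <;> split_ifs <;> simp_all

theorem bias_leaf : leaf.bias = 1 := by
  simp +decide [bias, fitchProb_leaf]

theorem ambiguity_leaf : leaf.ambiguity = 0 := by
  simp +decide [ambiguity, fitchProb_leaf]

theorem RA_node_leaf_lt_RAVia_iff (t : PTree) (pz py : ℝ) :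
    (node pz py leaf t).RA < t.RAVia py ↔
      (1 - 2 * pz) * (1 + t.ambiguity) < (1 - 2 * py) * t.bias := by
  rw [RA_eq, RAVia_eq, bias_node, bias_leaf, ambiguity_leaf]
  constructor <;> intro h <;> linarith

theorem exists_RA_node_leaf_lt_RAVia (t : PTree) {pz d : ℝ} (hpz : pz < 1 / 2)
    (hd : 1 - 2 * pz < d) (hambiguity : 0 ≤ t.ambiguity)
    (hbias : d * (1 + t.ambiguity) < t.bias) :
    ∃ py, 0 < py ∧ py < 1 / 2 ∧ (node pz py leaf t).RA < t.RAVia py ∧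
      (1 - 2 * py) * d < 1 - 2 * pz := by
  have hw : 0 < 1 - 2 * pz := by linarith
  have hd₀ : 0 < d := hw.trans hd
  have hB : 0 < t.bias := lt_of_le_of_lt (by positivity) hbias
  obtain ⟨θ, hθ₀, hθ₁⟩ := exists_between ((div_lt_one hB).2 hbias)
  have hθ : 0 < θ := lt_of_le_of_lt (by positivity) hθ₀
  have hwd₀ : 0 < (1 - 2 * pz) / d := div_pos hw hd₀
  have hwd₁ : (1 - 2 * pz) / d < 1 := (div_lt_one hd₀).2 hd
  have hu : 1 - 2 * ((1 - θ * ((1 - 2 * pz) / d)) / 2) = θ * ((1 - 2 * pz) / d) := by ring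
  refine ⟨(1 - θ * ((1 - 2 * pz) / d)) / 2, by nlinarith, by nlinarith, ?_, ?_⟩
  · rw [RA_node_leaf_lt_RAVia_iff, hu]
    rw [div_lt_iff₀ hB] at hθ₀
    calc (1 - 2 * pz) * (1 + t.ambiguity) = (1 - 2 * pz) / d * (d * (1 + t.ambiguity)) := by
          field_simp
      _ < (1 - 2 * pz) / d * (θ * t.bias) := mul_lt_mul_of_pos_left hθ₀ hwd₀
      _ = θ * ((1 - 2 * pz) / d) * t.bias := by ring
  · rw [hu, mul_assoc, div_mul_cancel₀ _ hd₀.ne']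
    exact mul_lt_of_lt_one_left hw hθ₁

end PTree

theorem bias_balanced_succ (q : ℝ) (n : ℕ) :
    (balanced q (n + 1)).bias =
      (1 - 2 * q) * (balanced q n).bias * (1 + (balanced q n).ambiguity) := by
  rw [balanced, PTree.bias_node]
  ring

theorem ambiguity_balanced_succ (q : ℝ) (n : ℕ) :
    (balanced q (n + 1)).ambiguity = (balanced q n).ambiguity ^ 2 +
      ((1 - (balanced q n).ambiguity) ^ 2 - (1 - 2 * q) ^ 2 * (balanced q n).bias ^ 2) / 2 := by
  rw [balanced, PTree.ambiguity_node]
  ring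

theorem ambiguity_balanced_one (q : ℝ) : (balanced q 1).ambiguity = 2 * q * (1 - q) := by
  rw [ambiguity_balanced_succ, balanced, PTree.bias_leaf, PTree.ambiguity_leaf]
  ring

theorem ambiguity_balanced_two (q : ℝ) :
    (balanced q 2).ambiguity = 2 * q * (1 - q) - 2 * q ^ 2 * (1 - q) ^ 2 := by
  rw [ambiguity_balanced_succ, ambiguity_balanced_one, bias_balanced_succ, balanced,
    PTree.bias_leaf, PTree.ambiguity_leaf]
  ring

theorem bias_balanced_two (q : ℝ) :
    (balanced q 2).bias = (1 - 2 * q) ^ 2 * (1 + 2 * q * (1 - q)) := by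
  rw [bias_balanced_succ, ambiguity_balanced_one, bias_balanced_succ, balanced, PTree.bias_leaf,
    PTree.ambiguity_leaf]
  ring

theorem ambiguity_balanced_two_nonneg {q : ℝ} (hq₀ : 0 ≤ q) (hq₁ : q ≤ 1) :
    0 ≤ (balanced q 2).ambiguity := by
  have h : 2 * q * (1 - q) ≤ 1 := by nlinarith [sq_nonneg (2 * q - 1)]
  rw [ambiguity_balanced_two]
  nlinarith [mul_nonneg hq₀ (sub_nonneg.2 hq₁)]

theorem lt_bias_balanced_two {q : ℝ} (hq₀ : 0 < q) (hq₁ : q < 1 / 2) :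
    (1 - 2 * q) ^ 2 * (1 + (balanced q 2).ambiguity) < (balanced q 2).bias := by
  rw [ambiguity_balanced_two, bias_balanced_two]
  have : 0 < (1 - 2 * q) ^ 2 * (q * (1 - q)) ^ 2 := by
    have : 0 < 1 - 2 * q := by linarith
    have : 0 < 1 - q := by linarith
    positivity
  nlinarith

/-- existence of a misleading taxon: for any `p_z` with
`0 < p_z < 1/2` there are `n ≥ 2` and substitution probabilities
`q, p_y ∈ (0, 1/2)` such that, for the tree `T` whose root `ρ` has a single
leaf `z` attached by an edge of substitution probability `p_z` and the
balanced binary tree of depth `n` (probability `q` on every edge) attached by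
an edge of substitution probability `p_y`: (1) the substitution probability
from `ρ` to `z` is `p_z` (built into the construction); (2) the reconstruction
accuracy based on `Y` (the leaves of the balanced subtree, root state
estimated at `ρ`) exceeds that based on all of `X = Y ∪ {z}`; and (3) the net
substitution probability from `ρ` to every leaf `v ≠ z`, namely
`(1 − (1−2p_y)(1−2q)^n)/2`, is strictly greater than `p_z`. -/
theorem stmt3 (pz : ℝ) (hz0 : 0 < pz) (hz1 : pz < 1/2) :
    ∃ (n : ℕ) (q py : ℝ), 2 ≤ n ∧ 0 < q ∧ q < 1/2 ∧ 0 < py ∧ py < 1/2 ∧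
      (balanced q n).RAVia py > (PTree.node pz py PTree.leaf (balanced q n)).RA ∧
      pz < (1 - (1 - 2*py) * (1 - 2*q)^n) / 2 := by
  have hq₀ : 0 < pz / 2 := by positivity
  have hq₁ : pz / 2 < 1 / 2 := by linarith
  have hd : 1 - 2 * pz < (1 - 2 * (pz / 2)) ^ 2 := by nlinarith
  obtain ⟨py, hpy₀, hpy₁, hRA, hleaf⟩ :=
    (balanced (pz / 2) 2).exists_RA_node_leaf_lt_RAVia hz1 hd
      (ambiguity_balanced_two_nonneg hq₀.le (by linarith)) (lt_bias_balanced_two hq₀ hq₁)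
  exact ⟨2, pz / 2, py, le_rfl, hq₀, hq₁, hpy₀, hpy₁, hRA, by linarith⟩
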